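/- arXiv:hep-th/0211089 — 3 statements merged into one kernel-verified Lean document; each statement's English description precedes it below -/
import Mathlib

section
/- If a 4-form F on V satisfies ι_X F ∧ F = 0 for all X ∈ V and ι_X F ∧ ι_Y F = 0 for all X, Y ∈ V, then for all vectors X, Y, Z ∈ V both ι_Z ι_Y ι_X F ∧ F = 0 and ι_Y ι_X F ∧ ι_Z F = 0 hold. -/
/-- The interior product `ι_X F` of a vector `X ∈ V` with a form `F` on `V`,
where forms on `V` are elements of the exterior algebra of the dual space `V*`:
it is the contraction of `F` with `X` in its first argument. -/
noncomputable def interiorProduct {V : Type*} [AddCommGroup V] [Module ℝ V] (X : V) :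
    ExteriorAlgebra ℝ (Module.Dual ℝ V) →ₗ[ℝ] ExteriorAlgebra ℝ (Module.Dual ℝ V) :=
  CliffordAlgebra.contractLeft (Module.Dual.eval ℝ V X)

open ExteriorAlgebra

section aux
variable {R : Type*} [CommRing R] {M : Type*} [AddCommGroup M] [Module R M]
  (d : Module.Dual R M)

/-- Leibniz rule for the interior product on homogeneous elements. -/
lemma contractLeft_mul_of_mem (n : ℕ) {a : ExteriorAlgebra R M} (ha : a ∈ ⋀[R]^n M)
    (b : ExteriorAlgebra R M) :
    CliffordAlgebra.contractLeft d (a * b) =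
      CliffordAlgebra.contractLeft d a * b
        + ((-1 : R) ^ n) • (a * CliffordAlgebra.contractLeft d b) := by
  induction ha using Submodule.pow_induction_on_left' with
  | algebraMap r =>
      simp [CliffordAlgebra.contractLeft_algebraMap_mul,
        CliffordAlgebra.contractLeft_algebraMap]
  | add x y i hx hy ihx ihy =>
      simp only [add_mul, map_add, ihx, ihy, mul_add, smul_add]
      abel
  | mem_mul m hm i x hx ih =>
      obtain ⟨v, rfl⟩ := hm
      rw [mul_assoc, CliffordAlgebra.contractLeft_ι_mul, CliffordAlgebra.contractLeft_ι_mul, ih]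
      simp only [mul_add, smul_sub, smul_add, sub_mul, smul_mul_assoc, mul_smul_comm,
        pow_succ, mul_assoc, neg_smul, mul_neg, one_smul, smul_smul, mul_one, neg_neg]
      abel

/-- The interior product lowers degree by one. -/
lemma contractLeft_mem_of_mem (n : ℕ) {a : ExteriorAlgebra R M} (ha : a ∈ ⋀[R]^n M) :
    CliffordAlgebra.contractLeft d a ∈ ⋀[R]^(n - 1) M := by
  induction ha using Submodule.pow_induction_on_left' with
  | algebraMap r =>
      rw [CliffordAlgebra.contractLeft_algebraMap]
      exact Submodule.zero_mem _
  | add x y i hx hy ihx ihy =>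
      rw [map_add]; exact add_mem ihx ihy
  | mem_mul m hm i x hx ih =>
      obtain ⟨v, rfl⟩ := hm
      rw [CliffordAlgebra.contractLeft_ι_mul]
      refine sub_mem (Submodule.smul_mem _ _ ?_) ?_
      · simpa using hx
      · rcases i with _ | j
        · rw [pow_zero] at hx
          obtain ⟨r, rfl⟩ := Submodule.mem_one.mp hx
          simp [CliffordAlgebra.contractLeft_algebraMap]
        · simp only [Nat.succ_sub_one] at ih ⊢
          show _ ∈ LinearMap.range (ι R : M →ₗ[R] ExteriorAlgebra R M) ^ (j + 1)
          rw [pow_succ']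
          exact Submodule.mul_mem_mul ⟨v, rfl⟩ ih

/-- Elements of degree 2 are central in the exterior algebra. -/
lemma central_of_mem_two {a : ExteriorAlgebra R M} (ha : a ∈ ⋀[R]^2 M)
    (b : ExteriorAlgebra R M) : a * b = b * a := by
  replace ha : a ∈ LinearMap.range (ι R : M →ₗ[R] ExteriorAlgebra R M) *
      LinearMap.range (ι R : M →ₗ[R] ExteriorAlgebra R M) := by
    rw [← pow_two]; exact ha
  refine Submodule.mul_induction_on ha ?_ fun x y ihx ihy => by
    rw [add_mul, ihx, ihy, mul_add]
  rintro m ⟨v, rfl⟩ n ⟨w, rfl⟩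
  induction b using CliffordAlgebra.induction with
      | algebraMap r => rw [Algebra.commutes]
      | ι u =>
          have h1 : ι R w * ι R u = - (ι R u * ι R w) :=
            eq_neg_of_add_eq_zero_left (ι_add_mul_swap w u)
          have h2 : ι R v * ι R u = - (ι R u * ι R v) :=
            eq_neg_of_add_eq_zero_left (ι_add_mul_swap v u)
          rw [mul_assoc, h1, mul_neg, ← mul_assoc, h2, neg_mul, neg_neg, mul_assoc]
      | mul x y ihx ihy => rw [← mul_assoc, ihx, mul_assoc, ihy, ← mul_assoc]
      | add x y ihx ihy => rw [mul_add, ihx, ihy, add_mul]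

end aux

section key
variable {M : Type*} [AddCommGroup M] [Module ℝ M]

local notation "C" => fun (d : Module.Dual ℝ M) =>
  (CliffordAlgebra.contractLeft (Q := (0 : QuadraticForm ℝ M)) d)

lemma key {ι : Type*} (e : ι → Module.Dual ℝ M)
    (F : ExteriorAlgebra ℝ M) (hF : F ∈ ⋀[ℝ]^4 M)
    (h1 : ∀ i, C (e i) F * F = 0)
    (h2 : ∀ i j, C (e i) F * C (e j) F = 0) :
    ∀ i j k,
      C (e k) (C (e j) (C (e i) F)) * F = 0 ∧ C (e j) (C (e i) F) * C (e k) F = 0 := by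
  have hm3 : ∀ i, C (e i) F ∈ ⋀[ℝ]^3 M := fun i => by
    simpa using contractLeft_mem_of_mem (e i) 4 hF
  have hm2 : ∀ i j, C (e j) (C (e i) F) ∈ ⋀[ℝ]^2 M := fun i j => by
    simpa using contractLeft_mem_of_mem (e j) 3 (hm3 i)
  have hanti : ∀ (d d' : Module.Dual ℝ M) (w : ExteriorAlgebra ℝ M),
      C d (C d' w) = -(C d' (C d w)) := fun d d' w =>
    CliffordAlgebra.contractLeft_comm (Q := (0 : QuadraticForm ℝ M)) (d := d) (d' := d') w
  -- the two-fold contraction wedged with `F` vanishes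
  have G1 : ∀ i j, C (e j) (C (e i) F) * F = 0 := by
    intro i j
    have h := contractLeft_mul_of_mem (e j) 3 (hm3 i) F
    rw [h1 i, map_zero, h2 i j, smul_zero, add_zero] at h
    exact h.symm
  -- A + B = 0
  have hAB : ∀ i j k,
      C (e k) (C (e j) (C (e i) F)) * F + C (e j) (C (e i) F) * C (e k) F = 0 := by
    intro i j k
    have h := contractLeft_mul_of_mem (e k) 2 (hm2 i j) F
    rw [G1 i j, map_zero, neg_one_sq, one_smul] at h
    exact h.symm
  -- symmetry relation from differentiating h2
  have hR : ∀ i j k, C (e i) (C (e k) F) * C (e j) F = C (e i) (C (e j) F) * C (e k) F := by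
    intro i j k
    have h := contractLeft_mul_of_mem (e i) 3 (hm3 k) (C (e j) F)
    rw [h2 k j, map_zero] at h
    have h3 : ((-1 : ℝ) ^ 3) = -1 := by norm_num
    rw [h3, neg_smul, one_smul, ← sub_eq_add_neg] at h
    have h' := sub_eq_zero.mp h.symm
    rw [h', central_of_mem_two (hm2 j i) (C (e k) F)]
  intro i j k
  have hB0 : C (e j) (C (e i) F) * C (e k) F = 0 := by
    have chain : C (e j) (C (e i) F) * C (e k) F = -(C (e j) (C (e i) F) * C (e k) F) := by
      calc C (e j) (C (e i) F) * C (e k) F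
          = -(C (e i) (C (e j) F) * C (e k) F) := by rw [hanti (e j) (e i) F, neg_mul]
        _ = -(C (e i) (C (e k) F) * C (e j) F) := by rw [hR i j k]
        _ = C (e k) (C (e i) F) * C (e j) F := by
            rw [hanti (e i) (e k) F, neg_mul, neg_neg]
        _ = C (e k) (C (e j) F) * C (e i) F := hR k j i
        _ = -(C (e j) (C (e k) F) * C (e i) F) := by rw [hanti (e k) (e j) F, neg_mul]
        _ = -(C (e j) (C (e i) F) * C (e k) F) := by rw [hR j i k]
    have h2b : (2 : ℝ) • (C (e j) (C (e i) F) * C (e k) F) = 0 := by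
      rw [two_smul, ← sub_neg_eq_add, ← chain, sub_self]
    have := congrArg (fun x => (2 : ℝ)⁻¹ • x) h2b
    simpa [smul_smul] using this
  refine ⟨?_, hB0⟩
  have h := hAB i j k
  rwa [hB0, add_zero] at h

end key


/-- If a 4-form `F` on `V` satisfies `ι_X F ∧ F = 0` for all `X ∈ V` and
`ι_X F ∧ ι_Y F = 0` for all `X, Y ∈ V`, then for all `X, Y, Z ∈ V` both
`ι_Z ι_Y ι_X F ∧ F = 0` (the Plücker relation) and `ι_Y ι_X F ∧ ι_Z F = 0` hold. -/
theorem pluecker_relations_of_susy_conditions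
    {V : Type*} [AddCommGroup V] [Module ℝ V] [FiniteDimensional ℝ V]
    (F : ExteriorAlgebra ℝ (Module.Dual ℝ V))
    (hF : F ∈ ⋀[ℝ]^4 (Module.Dual ℝ V))
    (h1 : ∀ X : V, interiorProduct X F * F = 0)
    (h2 : ∀ X Y : V, interiorProduct X F * interiorProduct Y F = 0) :
    ∀ X Y Z : V,
      interiorProduct Z (interiorProduct Y (interiorProduct X F)) * F = 0 ∧
        interiorProduct Y (interiorProduct X F) * interiorProduct Z F = 0 := by
  intro X Y Z
  exact key (Module.Dual.eval ℝ V) F hF h1 h2 X Y Z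
end

section
/- Let (G_L)_{L∈I} be a finite family of 4-forms on V and (c_L)_{L∈I} real numbers. If Σ_L c_L ι_X G_L ∧ ι_Y G_L = 0 for all X, Y ∈ V, then for all X, Y, Z ∈ V one has Σ_L c_L ι_Y ι_X G_L ∧ ι_Z G_L = Σ_L c_L ι_Y ι_Z G_L ∧ ι_X G_L; that is, the 5-form Σ_L c_L ι_Y ι_X G_L ∧ ι_Z G_L is symmetric under the interchange of X and Z. -/
open CliffordAlgebra ExteriorAlgebra

section Aux
variable {M : Type*} [AddCommGroup M] [Module ℝ M]

lemma contract_leibniz (d : Module.Dual ℝ M) (a b : ExteriorAlgebra ℝ M) :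
    CliffordAlgebra.contractLeft d (a * b) =
      CliffordAlgebra.contractLeft d a * b +
        CliffordAlgebra.involute a * CliffordAlgebra.contractLeft d b := by
  induction a using CliffordAlgebra.induction generalizing b with
  | algebraMap r =>
      simp [CliffordAlgebra.contractLeft_algebraMap, Algebra.smul_def,
        CliffordAlgebra.contractLeft_algebraMap_mul]
  | ι v =>
      simp [CliffordAlgebra.contractLeft_ι_mul, CliffordAlgebra.contractLeft_ι,
        CliffordAlgebra.involute_ι, Algebra.smul_def, sub_eq_add_neg]
  | mul a₁ a₂ h1 h2 =>
      rw [mul_assoc, h1, h2, h1]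
      simp only [map_mul, mul_add, add_mul, mul_assoc]
      abel
  | add a₁ a₂ h1 h2 =>
      simp only [add_mul, map_add, h1, h2]; abel

lemma involute_exteriorPower {n : ℕ} {a : ExteriorAlgebra ℝ M} (ha : a ∈ ⋀[ℝ]^n M) :
    CliffordAlgebra.involute a = ((-1 : ℝ) ^ n) • a := by
  refine Submodule.pow_induction_on_left' (M := LinearMap.range (ExteriorAlgebra.ι ℝ (M := M)))
    (C := fun n a _ => CliffordAlgebra.involute a = ((-1 : ℝ) ^ n) • a) ?_ ?_ ?_ ha
  · intro r; simp
  · intro x y i hx hy ihx ihy; simp [ihx, ihy, smul_add]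
  · rintro m ⟨v, rfl⟩ i x hx ih
    rw [map_mul, ih, CliffordAlgebra.involute_ι, mul_smul_comm, neg_mul, smul_neg,
      ← neg_smul, pow_succ, mul_neg_one]

lemma contract_exteriorPower {n : ℕ} (d : Module.Dual ℝ M) {a : ExteriorAlgebra ℝ M}
    (ha : a ∈ ⋀[ℝ]^(n+1) M) :
    CliffordAlgebra.contractLeft d a ∈ ⋀[ℝ]^n M := by
  suffices h : ∀ m, n + 1 = m + 1 → CliffordAlgebra.contractLeft d a ∈ ⋀[ℝ]^m M from h n rfl
  refine Submodule.pow_induction_on_left' (M := LinearMap.range (ExteriorAlgebra.ι ℝ (M := M)))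
    (C := fun k x _ => ∀ m, k = m + 1 → CliffordAlgebra.contractLeft d x ∈ ⋀[ℝ]^m M) ?_ ?_ ?_ ha
  · intro r m hm; omega
  · intro x y i hx hy ihx ihy m hm
    rw [map_add]; exact add_mem (ihx m hm) (ihy m hm)
  · rintro mm ⟨v, rfl⟩ i x hxi ih m hm
    obtain rfl : i = m := by omega
    rw [CliffordAlgebra.contractLeft_ι_mul]
    refine sub_mem (Submodule.smul_mem _ _ hxi) ?_
    rcases i with _ | j
    · rw [pow_zero] at hxi
      obtain ⟨r, rfl⟩ := Submodule.mem_one.mp hxi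
      simp
    · have h2 := ih j rfl
      have : ExteriorAlgebra.ι ℝ v * CliffordAlgebra.contractLeft d x ∈
          LinearMap.range (ExteriorAlgebra.ι ℝ (M := M)) * (⋀[ℝ]^j M) :=
        Submodule.mul_mem_mul ⟨v, rfl⟩ h2
      rwa [← pow_succ'] at this

lemma degree_two_central {x : ExteriorAlgebra ℝ M} (hx : x ∈ ⋀[ℝ]^2 M)
    (b : ExteriorAlgebra ℝ M) : x * b = b * x := by
  have key : ∀ u v : M, ∀ b : ExteriorAlgebra ℝ M,
      (ExteriorAlgebra.ι ℝ u * ExteriorAlgebra.ι ℝ v) * b =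
        b * (ExteriorAlgebra.ι ℝ u * ExteriorAlgebra.ι ℝ v) := by
    intro u v b
    induction b using CliffordAlgebra.induction with
    | algebraMap r => rw [Algebra.commutes]
    | ι w =>
        have huw : ExteriorAlgebra.ι ℝ (M := M) u * ExteriorAlgebra.ι ℝ w
            = -(ExteriorAlgebra.ι ℝ w * ExteriorAlgebra.ι ℝ u) := by
          exact eq_neg_of_add_eq_zero_left (ExteriorAlgebra.ι_add_mul_swap u w)
        have hvw : ExteriorAlgebra.ι ℝ (M := M) v * ExteriorAlgebra.ι ℝ w
            = -(ExteriorAlgebra.ι ℝ w * ExteriorAlgebra.ι ℝ v) := by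
          exact eq_neg_of_add_eq_zero_left (ExteriorAlgebra.ι_add_mul_swap v w)
        calc ExteriorAlgebra.ι ℝ u * ExteriorAlgebra.ι ℝ v * ExteriorAlgebra.ι ℝ w
            = ExteriorAlgebra.ι ℝ u * (ExteriorAlgebra.ι ℝ v * ExteriorAlgebra.ι ℝ w) := by
              rw [mul_assoc]
          _ = -(ExteriorAlgebra.ι ℝ u * (ExteriorAlgebra.ι ℝ w * ExteriorAlgebra.ι ℝ v)) := by
              rw [hvw]; simp
          _ = -((ExteriorAlgebra.ι ℝ u * ExteriorAlgebra.ι ℝ w) * ExteriorAlgebra.ι ℝ v) := by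
              rw [mul_assoc]
          _ = (ExteriorAlgebra.ι ℝ w * ExteriorAlgebra.ι ℝ u) * ExteriorAlgebra.ι ℝ v := by
              rw [huw]; simp
          _ = ExteriorAlgebra.ι ℝ w * (ExteriorAlgebra.ι ℝ u * ExteriorAlgebra.ι ℝ v) := by
              rw [mul_assoc]
    | mul b₁ b₂ h1 h2 => rw [← mul_assoc, h1, mul_assoc, h2, ← mul_assoc]
    | add b₁ b₂ h1 h2 => rw [mul_add, h1, h2, add_mul]
  have hx2 : x ∈ LinearMap.range (ExteriorAlgebra.ι ℝ (M := M)) *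
      LinearMap.range (ExteriorAlgebra.ι ℝ (M := M)) := by rwa [← sq]
  refine Submodule.mul_induction_on hx2 ?_ ?_
  · rintro m ⟨u, rfl⟩ n ⟨v, rfl⟩; exact key u v b
  · intro y z hy hz; rw [add_mul, mul_add, hy, hz]

end Aux


set_option maxHeartbeats 1000000 in
set_option synthInstance.maxHeartbeats 400000 in
/-- For a finite family of 4-forms `G L` with real weights `c L`: if
`Σ_L c_L ι_X G_L ∧ ι_Y G_L = 0` for all `X, Y`, then the 5-form
`Σ_L c_L ι_Y ι_X G_L ∧ ι_Z G_L` is symmetric under the interchange of `X` and `Z`. -/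
theorem family_double_contraction_wedge_symm
    {V : Type*} [AddCommGroup V] [Module ℝ V] [FiniteDimensional ℝ V]
    {I : Type*} [Fintype I]
    (G : I → ExteriorAlgebra ℝ (Module.Dual ℝ V))
    (hG : ∀ L, G L ∈ ⋀[ℝ]^4 (Module.Dual ℝ V))
    (c : I → ℝ)
    (h2 : ∀ X Y : V, ∑ L, c L • (interiorProduct X (G L) * interiorProduct Y (G L)) = 0) :
    ∀ X Y Z : V,
      ∑ L, c L • (interiorProduct Y (interiorProduct X (G L)) * interiorProduct Z (G L)) =
        ∑ L, c L • (interiorProduct Y (interiorProduct Z (G L)) * interiorProduct X (G L)) := by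
  intro X Y Z
  have hdeg3 : ∀ (W : V) (L : I),
      interiorProduct W (G L) ∈ ⋀[ℝ]^3 (Module.Dual ℝ V) := fun W L =>
    contract_exteriorPower _ (hG L)
  have hdeg2 : ∀ (W W' : V) (L : I),
      interiorProduct W (interiorProduct W' (G L)) ∈ ⋀[ℝ]^2 (Module.Dual ℝ V) := fun W W' L =>
    contract_exteriorPower _ (hdeg3 W' L)
  have hstep : ∀ L, interiorProduct Y (interiorProduct X (G L) * interiorProduct Z (G L)) =
      interiorProduct Y (interiorProduct X (G L)) * interiorProduct Z (G L)
        - interiorProduct X (G L) * interiorProduct Y (interiorProduct Z (G L)) := by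
    intro L
    have h := contract_leibniz (Module.Dual.eval ℝ V Y) (interiorProduct X (G L))
      (interiorProduct Z (G L))
    rw [involute_exteriorPower (hdeg3 X L)] at h
    have : ((-1 : ℝ) ^ 3) = -1 := by norm_num
    rw [this, neg_one_smul, neg_mul] at h
    simpa [interiorProduct, sub_eq_add_neg] using h
  have h0 : ∑ L, c L • (interiorProduct Y (interiorProduct X (G L)) * interiorProduct Z (G L)
      - interiorProduct X (G L) * interiorProduct Y (interiorProduct Z (G L))) = 0 := by
    have h := congrArg (interiorProduct Y) (h2 X Z)
    rw [map_sum, map_zero] at h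
    rw [← h]
    refine Finset.sum_congr rfl fun L _ => ?_
    rw [map_smul, hstep L]
  have h1 : ∑ L, c L • (interiorProduct Y (interiorProduct X (G L)) * interiorProduct Z (G L))
      = ∑ L, c L • (interiorProduct X (G L) * interiorProduct Y (interiorProduct Z (G L))) := by
    rw [← sub_eq_zero, ← Finset.sum_sub_distrib]
    simpa [smul_sub] using h0
  rw [h1]
  refine Finset.sum_congr rfl fun L _ => ?_
  rw [degree_two_central (hdeg2 Y Z L) (interiorProduct X (G L))]
end

section
/- Let (G_L)_{L∈I} be a finite family of 4-forms on V and (c_L)_{L∈I} real numbers. If Σ_L c_L ι_X G_L ∧ G_L = 0 for all X ∈ V and Σ_L c_L ι_X G_L ∧ ι_Y G_L = 0 for all X, Y ∈ V, then for all X, Y, Z ∈ V both Σ_L c_L ι_Z ι_Y ι_X G_L ∧ G_L = 0 and Σ_L c_L ι_Y ι_X G_L ∧ ι_Z G_L = 0 hold. -/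
namespace PlueckerAux

open ExteriorAlgebra CliffordAlgebra

variable {R : Type*} [CommRing R] {M : Type*} [AddCommGroup M] [Module R M]
variable (d : Module.Dual R M)

/-- Contraction lowers degree by one. -/
lemma contract_mem {n : ℕ} {x : ExteriorAlgebra R M} (hx : x ∈ ⋀[R]^n M) :
    contractLeft d x ∈ ⋀[R]^(n - 1) M := by
  refine Submodule.pow_induction_on_left'
    (LinearMap.range (ι R : M →ₗ[R] ExteriorAlgebra R M))
    (C := fun i y _ => contractLeft d y ∈ ⋀[R]^(i - 1) M) ?_ ?_ ?_ hx
  · intro r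
    rw [contractLeft_algebraMap]
    exact Submodule.zero_mem _
  · intro x y i hx hy cx cy
    rw [map_add]
    exact Submodule.add_mem _ cx cy
  · rintro m ⟨v, rfl⟩ i x hxi cx
    rw [contractLeft_ι_mul]
    refine Submodule.sub_mem _ ?_ ?_
    · simpa using Submodule.smul_mem _ _ hxi
    · cases i with
      | zero =>
        obtain ⟨r, rfl⟩ := Submodule.mem_one.mp (by simpa using hxi)
        rw [contractLeft_algebraMap, mul_zero]
        exact Submodule.zero_mem _
      | succ k =>
        have : (ι R v : ExteriorAlgebra R M) * contractLeft d x ∈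
            LinearMap.range (ι R : M →ₗ[R] ExteriorAlgebra R M) *
              ⋀[R]^(k + 1 - 1) M :=
          Submodule.mul_mem_mul ⟨v, rfl⟩ cx
        simpa [pow_succ'] using this

/-- Signed Leibniz rule for the contraction. -/
lemma contract_mul {n : ℕ} {x : ExteriorAlgebra R M} (hx : x ∈ ⋀[R]^n M)
    (b : ExteriorAlgebra R M) :
    contractLeft d (x * b)
      = contractLeft d x * b + ((-1 : R) ^ n) • (x * contractLeft d b) := by
  refine Submodule.pow_induction_on_left'
    (LinearMap.range (ι R : M →ₗ[R] ExteriorAlgebra R M))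
    (C := fun i y _ => ∀ b, contractLeft d (y * b)
      = contractLeft d y * b + ((-1 : R) ^ i) • (y * contractLeft d b)) ?_ ?_ ?_ hx b
  · intro r b
    rw [contractLeft_algebraMap_mul, contractLeft_algebraMap]
    simp [Algebra.smul_def]
  · intro x y i hx hy cx cy b
    rw [add_mul, map_add, cx b, cy b, map_add]
    simp only [add_mul, smul_add, mul_add, add_mul]
    abel
  · rintro m ⟨v, rfl⟩ i x hxi cx b
    rw [mul_assoc, contractLeft_ι_mul, contractLeft_ι_mul, cx b]
    simp only [pow_succ, mul_smul_comm, smul_mul_assoc, sub_mul, smul_sub, mul_add, mul_neg,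
      neg_smul, one_smul, mul_one, mul_assoc]
    abel

/-- A single generator commutes with a degree `n` element up to sign. -/
lemma ι_comm {n : ℕ} (v : M) {b : ExteriorAlgebra R M} (hb : b ∈ ⋀[R]^n M) :
    (ι R v : ExteriorAlgebra R M) * b = ((-1 : R) ^ n) • (b * ι R v) := by
  refine Submodule.pow_induction_on_left'
    (LinearMap.range (ι R : M →ₗ[R] ExteriorAlgebra R M))
    (C := fun i y _ => (ι R v : ExteriorAlgebra R M) * y = ((-1 : R) ^ i) • (y * ι R v))
    ?_ ?_ ?_ hb
  · intro r
    simp [Algebra.commutes]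
  · intro x y i hx hy cx cy
    rw [mul_add, cx, cy, add_mul, smul_add]
  · rintro m ⟨w, rfl⟩ i x hxi cx
    have hanti : (ι R v : ExteriorAlgebra R M) * ι R w = -(ι R w * ι R v) := by
      exact eq_neg_of_add_eq_zero_left (ι_add_mul_swap v w)
    have : (ι R v : ExteriorAlgebra R M) * (ι R w * x)
        = -(ι R w * ((ι R v : ExteriorAlgebra R M) * x)) := by
      rw [← mul_assoc, hanti, neg_mul, mul_assoc]
    rw [this, cx, pow_succ]
    simp [mul_smul_comm, smul_mul_assoc, mul_assoc, mul_comm]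

/-- Graded commutativity. -/
lemma graded_comm {m n : ℕ} {a b : ExteriorAlgebra R M}
    (ha : a ∈ ⋀[R]^m M) (hb : b ∈ ⋀[R]^n M) :
    a * b = ((-1 : R) ^ (m * n)) • (b * a) := by
  refine Submodule.pow_induction_on_left'
    (LinearMap.range (ι R : M →ₗ[R] ExteriorAlgebra R M))
    (C := fun i y _ => y * b = ((-1 : R) ^ (i * n)) • (b * y)) ?_ ?_ ?_ ha
  · intro r
    simp [Algebra.commutes]
  · intro x y i hx hy cx cy
    rw [add_mul, cx, cy, mul_add, smul_add]
  · rintro m' ⟨v, rfl⟩ i x hxi cx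
    rw [mul_assoc, cx, mul_smul_comm, ← mul_assoc, ι_comm v hb, smul_mul_assoc, smul_smul,
      mul_assoc, ← pow_add]
    congr 2
    rw [Nat.succ_eq_add_one]
    ring

/-- Contraction lowers degree by one, successor form. -/
lemma contract_mem' {n : ℕ} {x : ExteriorAlgebra R M} (hx : x ∈ ⋀[R]^(n + 1) M) :
    contractLeft d x ∈ ⋀[R]^n M :=
  contract_mem d hx

end PlueckerAux


set_option maxHeartbeats 1000000 in
/-- For a finite family of 4-forms `G L` with real weights `c L`: if
`Σ_L c_L ι_X G_L ∧ G_L = 0` for all `X` and `Σ_L c_L ι_X G_L ∧ ι_Y G_L = 0` for all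
`X, Y`, then for all `X, Y, Z` both `Σ_L c_L ι_Z ι_Y ι_X G_L ∧ G_L = 0` and
`Σ_L c_L ι_Y ι_X G_L ∧ ι_Z G_L = 0` hold. -/
theorem family_pluecker_relations
    {V : Type*} [AddCommGroup V] [Module ℝ V] [FiniteDimensional ℝ V]
    {I : Type*} [Fintype I]
    (G : I → ExteriorAlgebra ℝ (Module.Dual ℝ V))
    (hG : ∀ L, G L ∈ ⋀[ℝ]^4 (Module.Dual ℝ V))
    (c : I → ℝ)
    (h1 : ∀ X : V, ∑ L, c L • (interiorProduct X (G L) * G L) = 0)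
    (h2 : ∀ X Y : V, ∑ L, c L • (interiorProduct X (G L) * interiorProduct Y (G L)) = 0) :
    ∀ X Y Z : V,
      (∑ L, c L •
        (interiorProduct Z (interiorProduct Y (interiorProduct X (G L))) * G L)) = 0 ∧
      (∑ L, c L •
        (interiorProduct Y (interiorProduct X (G L)) * interiorProduct Z (G L))) = 0 := by
  have hiP : ∀ (X : V), interiorProduct (V := V) X
      = CliffordAlgebra.contractLeft (Module.Dual.eval ℝ V X) := fun _ => rfl
  -- memberships
  have h3 : ∀ (X : V) (L : I), interiorProduct X (G L) ∈ ⋀[ℝ]^3 (Module.Dual ℝ V) := by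
    intro X L
    exact PlueckerAux.contract_mem' _ (hG L)
  have h2m : ∀ (X Y : V) (L : I),
      interiorProduct Y (interiorProduct X (G L)) ∈ ⋀[ℝ]^2 (Module.Dual ℝ V) := by
    intro X Y L
    exact PlueckerAux.contract_mem' _ (h3 X L)
  -- anticommutation of interior products
  have hswap : ∀ (a b : V) (w : ExteriorAlgebra ℝ (Module.Dual ℝ V)),
      interiorProduct a (interiorProduct b w) = -(interiorProduct b (interiorProduct a w)) := by
    intro a b w
    exact CliffordAlgebra.contractLeft_comm _ _ w
  -- Step 1
  have S1 : ∀ X Y : V,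
      ∑ L, c L • (interiorProduct Y (interiorProduct X (G L)) * G L) = 0 := by
    intro X Y
    have h0 := congrArg (interiorProduct Y) (h1 X)
    rw [map_zero, map_sum] at h0
    have hterm : ∀ L : I, interiorProduct Y (c L • (interiorProduct X (G L) * G L))
        = c L • (interiorProduct Y (interiorProduct X (G L)) * G L)
          - c L • (interiorProduct X (G L) * interiorProduct Y (G L)) := by
      intro L
      rw [LinearMap.map_smul, hiP Y, PlueckerAux.contract_mul _ (h3 X L) (G L)]
      rw [← hiP Y]
      rw [show ((-1 : ℝ) ^ 3) = -1 by norm_num, neg_one_smul, smul_add, smul_neg,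
        ← sub_eq_add_neg]
    rw [Finset.sum_congr rfl (fun L _ => hterm L), Finset.sum_sub_distrib, h2 X Y,
      sub_zero] at h0
    exact h0
  intro X Y Z
  -- Step 2 : P + Q = 0
  have hPQ : (∑ L, c L • (interiorProduct Z (interiorProduct Y (interiorProduct X (G L))) * G L))
      + (∑ L, c L • (interiorProduct Y (interiorProduct X (G L)) * interiorProduct Z (G L)))
      = 0 := by
    have h0 := congrArg (interiorProduct Z) (S1 X Y)
    rw [map_zero, map_sum] at h0
    have hterm : ∀ L : I,
        interiorProduct Z (c L • (interiorProduct Y (interiorProduct X (G L)) * G L))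
        = c L • (interiorProduct Z (interiorProduct Y (interiorProduct X (G L))) * G L)
          + c L • (interiorProduct Y (interiorProduct X (G L)) * interiorProduct Z (G L)) := by
      intro L
      rw [LinearMap.map_smul, hiP Z, PlueckerAux.contract_mul _ (h2m X Y L) (G L), ← hiP Z]
      rw [show ((-1 : ℝ) ^ 2) = 1 by norm_num, one_smul, smul_add]
    rw [Finset.sum_congr rfl (fun L _ => hterm L), Finset.sum_add_distrib] at h0
    exact h0
  -- Step 2' : P' + Q' = 0 with X and Z swapped
  have hPQ' : (∑ L, c L • (interiorProduct X (interiorProduct Y (interiorProduct Z (G L))) * G L))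
      + (∑ L, c L • (interiorProduct Y (interiorProduct Z (G L)) * interiorProduct X (G L)))
      = 0 := by
    have h0 := congrArg (interiorProduct X) (S1 Z Y)
    rw [map_zero, map_sum] at h0
    have hterm : ∀ L : I,
        interiorProduct X (c L • (interiorProduct Y (interiorProduct Z (G L)) * G L))
        = c L • (interiorProduct X (interiorProduct Y (interiorProduct Z (G L))) * G L)
          + c L • (interiorProduct Y (interiorProduct Z (G L)) * interiorProduct X (G L)) := by
      intro L
      rw [LinearMap.map_smul, hiP X, PlueckerAux.contract_mul _ (h2m Z Y L) (G L), ← hiP X]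
      rw [show ((-1 : ℝ) ^ 2) = 1 by norm_num, one_smul, smul_add]
    rw [Finset.sum_congr rfl (fun L _ => hterm L), Finset.sum_add_distrib] at h0
    exact h0
  -- Q is symmetric in X ↔ Z
  have hQsymm : (∑ L, c L • (interiorProduct Y (interiorProduct X (G L)) * interiorProduct Z (G L)))
      = (∑ L, c L • (interiorProduct Y (interiorProduct Z (G L)) * interiorProduct X (G L))) := by
    have h0 := congrArg (interiorProduct Y) (h2 X Z)
    rw [map_zero, map_sum] at h0
    have hterm : ∀ L : I,
        interiorProduct Y (c L • (interiorProduct X (G L) * interiorProduct Z (G L)))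
        = c L • (interiorProduct Y (interiorProduct X (G L)) * interiorProduct Z (G L))
          - c L • (interiorProduct Y (interiorProduct Z (G L)) * interiorProduct X (G L)) := by
      intro L
      rw [LinearMap.map_smul, hiP Y,
        PlueckerAux.contract_mul _ (h3 X L) (interiorProduct Z (G L)), ← hiP Y]
      rw [show ((-1 : ℝ) ^ 3) = -1 by norm_num, neg_one_smul, ← sub_eq_add_neg, smul_sub]
      congr 2
      rw [PlueckerAux.graded_comm (h3 X L) (h2m Z Y L)]
      norm_num
    rw [Finset.sum_congr rfl (fun L _ => hterm L), Finset.sum_sub_distrib,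
      sub_eq_zero] at h0
    exact h0
  -- P is antisymmetric in X ↔ Z
  have hPanti : (∑ L, c L • (interiorProduct Z (interiorProduct Y (interiorProduct X (G L))) * G L))
      = -(∑ L, c L • (interiorProduct X (interiorProduct Y (interiorProduct Z (G L))) * G L)) := by
    rw [← Finset.sum_neg_distrib]
    refine Finset.sum_congr rfl fun L _ => ?_
    have : interiorProduct Z (interiorProduct Y (interiorProduct X (G L)))
        = -(interiorProduct X (interiorProduct Y (interiorProduct Z (G L)))) := by
      rw [hswap Z Y, hswap Z X, map_neg, neg_neg, hswap Y X]
    rw [this]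
    simp [smul_neg]
  -- conclude
  set P := ∑ L, c L • (interiorProduct Z (interiorProduct Y (interiorProduct X (G L))) * G L)
    with hPdef
  set Q := ∑ L, c L • (interiorProduct Y (interiorProduct X (G L)) * interiorProduct Z (G L))
    with hQdef
  have hA : -P + Q = 0 := by
    calc -P + Q
        = (∑ L, c L • (interiorProduct X (interiorProduct Y (interiorProduct Z (G L))) * G L))
          + (∑ L, c L • (interiorProduct Y (interiorProduct Z (G L)) * interiorProduct X (G L)))
          := by rw [hPanti, neg_neg, hQsymm]
      _ = 0 := hPQ'
  have hP : P = -Q := eq_neg_of_add_eq_zero_left hPQ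
  have h2Q : (2 : ℝ) • Q = 0 := by
    rw [two_smul]
    rw [hP] at hA
    simpa using hA
  have hQ0 : Q = 0 := (smul_eq_zero.mp h2Q).resolve_left two_ne_zero
  have hP0 : P = 0 := by rw [hP, hQ0, neg_zero]
  exact ⟨hP0, hQ0⟩
end
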